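/- arXiv:1502.07258 — 4 statements merged into one kernel-verified Lean document; each statement's English description precedes it below -/
import Mathlib

section
/- Let F be a finite field, n a natural number, f a function from F^n to F, and let p and q be multilinear polynomials in F[X_1,…,X_n]. Let D_p = {x ∈ F^n : f(x) ≠ p(x)} and D_q = {x ∈ F^n : f(x) ≠ q(x)}. If |D_p| + |D_q| + n·|F|^{n−1} < |F|^n, then p = q. (In particular, for δ-closeness with 2δ + n/|F| < 1, a function f can be δ-close to at most one multilinear polynomial.) -/
/-!
Two distinct multilinear polynomials differ by a nonzero multilinear polynomial, which by the
Schwartz–Zippel lemma vanishes on at most `n·|F|^{n-1}` points; so their evaluation tables are at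
Hamming distance at least `|F|^n - n·|F|^{n-1}`. By the triangle inequality for the Hamming
distance, this is at most `|D_p| + |D_q|`, contradicting the hypothesis.
-/

def MvPolynomial.Multilinear {F : Type*} [CommSemiring F] {n : ℕ}
    (p : MvPolynomial (Fin n) F) : Prop :=
  ∀ i : Fin n, p.degreeOf i ≤ 1

open Finset

theorem natCard_ne_eq_hammingDist {ι β : Type*} [Fintype ι] [DecidableEq β] (f g : ι → β) :
    Nat.card {x // f x ≠ g x} = hammingDist f g := by
  rw [Nat.card_eq_fintype_card, Fintype.card_subtype, hammingDist]

namespace MvPolynomial.Multilinear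

variable {F : Type*} {n : ℕ}

theorem sub [CommRing F] {p q : MvPolynomial (Fin n) F} (hp : p.Multilinear)
    (hq : q.Multilinear) : (p - q).Multilinear := fun i =>
  (degreeOf_sub_le i p q).trans (max_le (hp i) (hq i))

theorem card_zeros_le [CommRing F] [IsDomain F] [Fintype F] [DecidableEq F]
    {r : MvPolynomial (Fin n) F} (hr : r.Multilinear) (hr0 : r ≠ 0) :
    #{x | eval x r = 0} ≤ n * Fintype.card F ^ (n - 1) := by
  have hSZ := schwartz_zippel_sum_degreeOf hr0 fun _ => univ
  simp only [Fintype.piFinset_univ, card_univ, prod_const, Fintype.card_fin] at hSZ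
  have hdeg : ∑ i, (r.degreeOf i / Fintype.card F : ℚ≥0) ≤ n / Fintype.card F := by
    calc ∑ i, (r.degreeOf i / Fintype.card F : ℚ≥0)
      _ ≤ ∑ _i : Fin n, 1 / (Fintype.card F : ℚ≥0) := by
        gcongr with i; exact_mod_cast hr i
      _ = n / Fintype.card F := by simp [div_eq_mul_inv]
  rw [div_le_iff₀ (by positivity)] at hSZ
  have hcard : (#{x | eval x r = 0} : ℚ≥0) ≤ n * Fintype.card F ^ (n - 1) := by
    calc _ ≤ _ := hSZ
      _ ≤ n / Fintype.card F * Fintype.card F ^ n := by gcongr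
      _ = _ := by
        rcases n with _ | n
        · simp
        · rw [Nat.add_sub_cancel, pow_succ]; field_simp
  exact_mod_cast hcard

theorem card_pow_le_hammingDist_add [CommRing F] [IsDomain F] [Fintype F] [DecidableEq F]
    {p q : MvPolynomial (Fin n) F} (hp : p.Multilinear) (hq : q.Multilinear) (hpq : p ≠ q) :
    Fintype.card F ^ n ≤ hammingDist (fun x => eval x p) (fun x => eval x q)
      + n * Fintype.card F ^ (n - 1) := by
  have hzeros := (hp.sub hq).card_zeros_le (sub_ne_zero.mpr hpq)
  simp only [map_sub, sub_eq_zero] at hzeros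
  have hsplit := card_filter_add_card_filter_not (s := univ)
    (fun x : Fin n → F => eval x p = eval x q)
  simp only [card_univ, Fintype.card_fun, Fintype.card_fin, ← ne_eq] at hsplit
  rw [hammingDist]
  omega

end MvPolynomial.Multilinear

/-- **Uniqueness of close multilinear polynomials.**
If `f : F^n → F` differs from the multilinear polynomials `p` and `q` on sets `D_p`, `D_q` with
`|D_p| + |D_q| + n·|F|^{n−1} < |F|^n`, then `p = q`. -/
theorem multilinear_close_unique (F : Type*) [Field F] [Fintype F] (n : ℕ)
    (f : (Fin n → F) → F) (p q : MvPolynomial (Fin n) F)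
    (hp : p.Multilinear) (hq : q.Multilinear)
    (h : Nat.card {x : Fin n → F // f x ≠ MvPolynomial.eval x p}
        + Nat.card {x : Fin n → F // f x ≠ MvPolynomial.eval x q}
        + n * Fintype.card F ^ (n - 1) < Fintype.card F ^ n) :
    p = q := by
  classical
  by_contra hpq
  have hdist := hp.card_pow_le_hammingDist_add hq hpq
  have htri := hammingDist_triangle (fun x => MvPolynomial.eval x p) f
    (fun x => MvPolynomial.eval x q)
  rw [natCard_ne_eq_hammingDist, natCard_ne_eq_hammingDist, hammingDist_comm] at h
  omega
end

section
/- (Self-correction of multilinear functions.) Let F be a finite field, n a natural number, δ ≥ 0 a real number, f : F^n → F a function, and p a multilinear polynomial in F[X_1,…,X_n] such that |{z ∈ F^n : f(z) ≠ p(z)}| ≤ δ·|F|^n. Fix x ∈ F^n and distinct nonzero elements a_0, a_1, …, a_n of F. Then the number of y ∈ F^n such that the unique univariate polynomial P of degree at most n with P(a_i) = f(x + a_i·y) for all i ∈ {0,…,n} satisfies P(0) = p(x) is at least (1 − δ(n+1))·|F|^n. -/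
lemma multilinear_totalDegree_le {F : Type*} [CommSemiring F] {n : ℕ}
    (p : MvPolynomial (Fin n) F) (hp : p.Multilinear) : p.totalDegree ≤ n := by
  rw [MvPolynomial.totalDegree]
  apply Finset.sup_le
  intro d hd
  have h1 : ∀ i, d i ≤ 1 := fun i => le_trans
    (by rw [MvPolynomial.degreeOf_eq_sup]
        exact Finset.le_sup (f := fun m => m i) hd) (hp i)
  calc d.sum (fun _ e => e) = ∑ i ∈ d.support, d i := rfl
    _ ≤ ∑ i : Fin n, d i := Finset.sum_le_sum_of_subset (Finset.subset_univ _)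
    _ ≤ ∑ _i : Fin n, 1 := Finset.sum_le_sum fun i _ => h1 i
    _ = n := by simp

lemma eval_line {F : Type*} [CommRing F] {n : ℕ} (p : MvPolynomial (Fin n) F)
    (x y : Fin n → F) (t : F) :
    (MvPolynomial.aeval (fun j => Polynomial.C (x j) + Polynomial.C (y j) * Polynomial.X) p).eval t
      = MvPolynomial.eval (fun j => x j + y j * t) p := by
  rw [MvPolynomial.aeval_def, ← Polynomial.coe_evalRingHom,
    MvPolynomial.eval₂_comp_left (Polynomial.evalRingHom t)]
  simp only [Polynomial.coe_evalRingHom, Function.comp_def, Polynomial.eval_add,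
    Polynomial.eval_mul, Polynomial.eval_C, Polynomial.eval_X]
  rw [MvPolynomial.eval, MvPolynomial.eval₂Hom_congr rfl rfl rfl]
  congr 1
  ext r
  simp [Polynomial.algebraMap_eq]

/-- **Self-correction of multilinear functions.**
If `f : F^n → F` differs from a multilinear polynomial `p` on at most `δ·|F|^n` points, then for
at least a `(1 − δ(n+1))` fraction of directions `y ∈ F^n`, the unique degree-`≤ n` univariate
polynomial `P` interpolating `f` on the line `t ↦ x + t·y` at the `n+1` distinct nonzero points
`a_0,…,a_n` satisfies `P(0) = p(x)`. -/
theorem self_correction_multilinear (F : Type*) [Field F] [Fintype F] (n : ℕ)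
    (δ : ℝ) (hδ : 0 ≤ δ)
    (f : (Fin n → F) → F) (p : MvPolynomial (Fin n) F) (hp : p.Multilinear)
    (hclose : (Nat.card {z : Fin n → F // f z ≠ MvPolynomial.eval z p} : ℝ)
        ≤ δ * (Fintype.card F : ℝ) ^ n)
    (x : Fin n → F) (a : Fin (n + 1) → F)
    (ha : Function.Injective a) (ha0 : ∀ i, a i ≠ 0) :
    (1 - δ * (n + 1)) * (Fintype.card F : ℝ) ^ n ≤
      (Nat.card {y : Fin n → F //
        ∀ P : Polynomial F, P.degree ≤ (n : ℕ) →
          (∀ i : Fin (n + 1), P.eval (a i) = f (fun j => x j + a i * y j)) →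
          P.eval 0 = MvPolynomial.eval x p} : ℝ) := by
  classical
  set q : ℕ := Fintype.card F with hq
  -- the error set as a finset
  set E : Finset (Fin n → F) := Finset.univ.filter (fun z => f z ≠ MvPolynomial.eval z p) with hE
  have hEcard : (Nat.card {z : Fin n → F // f z ≠ MvPolynomial.eval z p}) = E.card := by
    rw [Nat.card_eq_fintype_card, hE, Fintype.card_subtype]
  have hEclose : (E.card : ℝ) ≤ δ * (q : ℝ) ^ n := by rwa [hEcard] at hclose
  -- per-direction bad sets
  set B : Fin (n + 1) → Finset (Fin n → F) :=
    fun i => Finset.univ.filter (fun y => (fun j => x j + a i * y j) ∈ E) with hB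
  have hBcard : ∀ i, (B i).card = E.card := by
    intro i
    have : B i = E.map ((Equiv.piCongrRight (fun j =>
        (Equiv.mulLeft₀ (a i) (ha0 i)).trans (Equiv.addLeft (x j)))).symm.toEmbedding) := by
      ext y
      rw [Finset.mem_map_equiv]
      simp only [hB, Finset.mem_filter, Finset.mem_univ, true_and, Equiv.symm_symm]
      exact Iff.rfl
    rw [this, Finset.card_map]
  set Bad : Finset (Fin n → F) := Finset.univ.biUnion B with hBad
  have hBadcard : Bad.card ≤ (n + 1) * E.card := by
    calc Bad.card ≤ ∑ i : Fin (n + 1), (B i).card := Finset.card_biUnion_le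
      _ = (n + 1) * E.card := by simp [hBcard, Finset.sum_const]
  -- the good set
  set Good : Finset (Fin n → F) := Finset.univ.filter (fun y =>
      ∀ P : Polynomial F, P.degree ≤ (n : ℕ) →
        (∀ i : Fin (n + 1), P.eval (a i) = f (fun j => x j + a i * y j)) →
        P.eval 0 = MvPolynomial.eval x p) with hGood
  have hGoodCard : (Nat.card {y : Fin n → F //
      ∀ P : Polynomial F, P.degree ≤ (n : ℕ) →
        (∀ i : Fin (n + 1), P.eval (a i) = f (fun j => x j + a i * y j)) →
        P.eval 0 = MvPolynomial.eval x p}) = Good.card := by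
    rw [Nat.card_eq_fintype_card, hGood, Fintype.card_subtype]
  -- key: not-bad implies good
  have hkey : ∀ y : Fin n → F, y ∉ Bad → y ∈ Good := by
    intro y hy
    simp only [hBad, Finset.mem_biUnion, Finset.mem_univ, true_and, not_exists, hB,
      Finset.mem_filter, hE, not_not, ne_eq] at hy
    have hline : ∀ i : Fin (n + 1),
        f (fun j => x j + a i * y j) = MvPolynomial.eval (fun j => x j + a i * y j) p := by
      intro i
      have := hy i
      simpa using this
    simp only [hGood, Finset.mem_filter, Finset.mem_univ, true_and]
    intro P hPdeg hPeval
    set Q : Polynomial F :=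
      MvPolynomial.aeval (fun j => Polynomial.C (x j) + Polynomial.C (y j) * Polynomial.X) p with hQ
    have hQdeg : Q.natDegree ≤ n := by
      have hdeg1 : ∀ j : Fin n,
          (Polynomial.C (x j) + Polynomial.C (y j) * Polynomial.X).natDegree ≤ 1 := by
        intro j
        apply le_trans (Polynomial.natDegree_add_le _ _)
        apply max_le
        · simp
        · exact le_trans Polynomial.natDegree_mul_le (by simp)
      have := MvPolynomial.aeval_natDegree_le (n := 1) p (multilinear_totalDegree_le p hp)
        (fun j => Polynomial.C (x j) + Polynomial.C (y j) * Polynomial.X) hdeg1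
      simpa using this
    have hPQ : P = Q := by
      apply Polynomial.eq_of_degrees_lt_of_eval_index_eq (s := (Finset.univ : Finset (Fin (n+1))))
        (v := a) (Function.Injective.injOn ha)
      · apply lt_of_le_of_lt hPdeg
        rw [Finset.card_univ, Fintype.card_fin]
        exact_mod_cast Nat.lt_succ_self n
      · apply lt_of_le_of_lt (Polynomial.natDegree_le_iff_degree_le.mp hQdeg)
        rw [Finset.card_univ, Fintype.card_fin]
        exact_mod_cast Nat.lt_succ_self n
      · intro i _
        rw [hPeval i, hQ, eval_line, hline i]
        have : (fun j => x j + a i * y j) = (fun j => x j + y j * a i) := by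
          funext j; ring
        rw [this]
    rw [hPQ, hQ, eval_line]
    simp
  -- counting
  have hcover : (Finset.univ : Finset (Fin n → F)) ⊆ Good ∪ Bad := by
    intro y _
    by_cases hy : y ∈ Bad
    · exact Finset.mem_union_right _ hy
    · exact Finset.mem_union_left _ (hkey y hy)
  have huniv : (Finset.univ : Finset (Fin n → F)).card = q ^ n := by
    simp [hq]
  have hcount : q ^ n ≤ Good.card + Bad.card := by
    calc q ^ n = (Finset.univ : Finset (Fin n → F)).card := huniv.symm
      _ ≤ (Good ∪ Bad).card := Finset.card_le_card hcover
      _ ≤ Good.card + Bad.card := Finset.card_union_le _ _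
  rw [hGoodCard]
  have h1 : ((q : ℝ)) ^ n ≤ (Good.card : ℝ) + (Bad.card : ℝ) := by exact_mod_cast hcount
  have h2 : (Bad.card : ℝ) ≤ ((n : ℝ) + 1) * E.card := by exact_mod_cast hBadcard
  have h3 : ((n : ℝ) + 1) * E.card ≤ ((n : ℝ) + 1) * (δ * (q : ℝ) ^ n) := by
    apply mul_le_mul_of_nonneg_left hEclose
    positivity
  nlinarith [h1, h2, h3]
end

section
/- Let F be a finite field, l a natural number, and g a function from the Boolean cube {0,1}^l to F that is not identically zero. Then the number of points t = (t_1,…,t_l) ∈ F^l satisfying Σ_{w ∈ {0,1}^l} g(w) · Π_{i : w_i = 1} t_i = 0 is at most l·|F|^{l−1}. -/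
/-! The sum is the evaluation at `t` of the multilinear polynomial `∑_w g(w) X^w`. Distinct `w`
give distinct squarefree monomials, so this polynomial is nonzero, and its total degree is at
most `l`. The Schwartz–Zippel lemma over `S = F` then bounds its zeros by `l · |F|^l / |F|`. -/

open Finset MvPolynomial

namespace MvPolynomial

section Multilinear

variable {σ R : Type*} [Fintype σ]

noncomputable def boolExponent (w : σ → Bool) : σ →₀ ℕ :=
  Finsupp.equivFunOnFinite.symm fun i => (w i).toNat

@[simp]
theorem boolExponent_apply (w : σ → Bool) (i : σ) : boolExponent w i = (w i).toNat := rfl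

theorem boolExponent_injective : Function.Injective (boolExponent (σ := σ)) := by
  intro w w' h
  have toNat_inj : ∀ a b : Bool, a.toNat = b.toNat → a = b := by decide
  funext i
  exact toNat_inj _ _ (DFunLike.congr_fun h i)

theorem degree_boolExponent_le (w : σ → Bool) : (boolExponent w).degree ≤ Fintype.card σ := by
  rw [Finsupp.degree_eq_sum]
  calc ∑ i, (w i).toNat ≤ ∑ _i : σ, 1 := sum_le_sum fun i _ => Bool.toNat_le _
    _ = Fintype.card σ := by simp

variable [DecidableEq σ] [CommSemiring R]

noncomputable def multilinearOfCoeffs (g : (σ → Bool) → R) : MvPolynomial σ R :=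
  ∑ w, monomial (boolExponent w) (g w)

theorem coeff_boolExponent_multilinearOfCoeffs (g : (σ → Bool) → R) (w : σ → Bool) :
    (multilinearOfCoeffs g).coeff (boolExponent w) = g w := by
  simp [multilinearOfCoeffs, coeff_sum, coeff_monomial, boolExponent_injective.eq_iff]

theorem multilinearOfCoeffs_ne_zero {g : (σ → Bool) → R} (hg : g ≠ 0) :
    multilinearOfCoeffs g ≠ 0 := by
  obtain ⟨w, hw⟩ := Function.ne_iff.mp hg
  intro h
  exact hw (by rw [← coeff_boolExponent_multilinearOfCoeffs g w, h, coeff_zero]; rfl)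

theorem totalDegree_multilinearOfCoeffs_le (g : (σ → Bool) → R) :
    (multilinearOfCoeffs g).totalDegree ≤ Fintype.card σ :=
  (totalDegree_finsetSum _ _).trans <| Finset.sup_le fun w _ =>
    (totalDegree_monomial_le _ _).trans (degree_boolExponent_le w)

theorem eval_multilinearOfCoeffs (g : (σ → Bool) → R) (x : σ → R) :
    eval x (multilinearOfCoeffs g) =
      ∑ w, g w * ∏ i ∈ univ.filter (fun i => w i = true), x i := by
  simp only [multilinearOfCoeffs, map_sum, eval_monomial]
  refine sum_congr rfl fun w _ => congrArg _ ?_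
  rw [Finsupp.prod_fintype _ _ (fun i => pow_zero _), prod_filter]
  refine prod_congr rfl fun i _ => ?_
  cases hw : w i <;> simp [hw]

end Multilinear

theorem card_zeros_mul_card_le {R : Type*} [CommRing R] [IsDomain R] [DecidableEq R] {n : ℕ}
    {p : MvPolynomial (Fin n) R} (hp : p ≠ 0) (S : Finset R) :
    #{x ∈ Fintype.piFinset fun _ ↦ S | eval x p = 0} * #S ≤ p.totalDegree * #S ^ n := by
  rcases S.eq_empty_or_nonempty with rfl | hS
  · simp
  have hS : (0 : ℚ≥0) < #S := mod_cast hS.card_pos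
  have h := schwartz_zippel_totalDegree hp S
  rw [div_le_div_iff₀ (by positivity) hS] at h
  exact_mod_cast h

end MvPolynomial

/-- If `g : {0,1}^l → F` is not identically zero, then the number of points `t ∈ F^l` with
`Σ_{w ∈ {0,1}^l} g(w) · Π_{i : w_i = 1} t_i = 0` is at most `l·|F|^{l−1}`. -/
theorem sum_prod_zeros_card_le (F : Type*) [Field F] [Fintype F] (l : ℕ)
    (g : (Fin l → Bool) → F) (hg : g ≠ 0) :
    Nat.card {t : Fin l → F //
        ∑ w : Fin l → Bool, g w * ∏ i ∈ Finset.univ.filter (fun i => w i = true), t i = 0}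
      ≤ l * Fintype.card F ^ (l - 1) := by
  classical
  have hcard : Nat.card {t : Fin l → F //
      ∑ w : Fin l → Bool, g w * ∏ i ∈ Finset.univ.filter (fun i => w i = true), t i = 0} =
      #{t ∈ Fintype.piFinset fun _ ↦ (univ : Finset F) |
        eval t (multilinearOfCoeffs g) = 0} := by
    simp [Nat.card_eq_fintype_card, Fintype.card_subtype, eval_multilinearOfCoeffs]
  have hzeros := card_zeros_mul_card_le (multilinearOfCoeffs_ne_zero hg) (univ : Finset F)
  rw [← hcard, card_univ] at hzeros
  refine Nat.le_of_mul_le_mul_right ?_ (Fintype.card_pos (α := F))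
  calc _ ≤ (multilinearOfCoeffs g).totalDegree * Fintype.card F ^ l := hzeros
    _ ≤ l * Fintype.card F ^ l := by
      gcongr
      simpa using totalDegree_multilinearOfCoeffs_le g
    _ = l * Fintype.card F ^ (l - 1) * Fintype.card F := by
      rcases l with _ | l
      · simp
      · rw [mul_assoc, ← pow_succ, Nat.add_sub_cancel]
end

section
/- (Soundness of the sum-check protocol.) Let F be a finite field and let h be a polynomial in F[X_1,…,X_l] whose degree in each variable is at most d, and suppose Σ_{w ∈ {0,1}^l} h(w) ≠ 0. Let g'_1 be a univariate polynomial over F of degree at most d, and for each i with 2 ≤ i ≤ l let g'_i be an arbitrary function assigning to each tuple (r_1,…,r_{i−1}) ∈ F^{i−1} a univariate polynomial over F of degree at most d. Then the number of tuples r = (r_1,…,r_l) ∈ F^l satisfying all of the following is at most d·l·|F|^{l−1}: (i) g'_1(0) + g'_1(1) = 0; (ii) for every i with 2 ≤ i ≤ l, g'_i(r_1,…,r_{i−1})(0) + g'_i(r_1,…,r_{i−1})(1) = g'_{i−1}(r_1,…,r_{i−2})(r_{i−1}); and (iii) g'_l(r_1,…,r_{l−1})(r_l) = h(r_1,…,r_l).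 -/
/-!
The honest prover's round-`k` polynomial sums `h` over the Boolean subcube whose first `k`
coordinates are fixed to `r` and leaves coordinate `k` free; it has degree at most `d`, passes every
consistency test, and its first test computes the true sum over the cube. If `r` passes all tests
although the claimed sum `0` is wrong, the prover's first polynomial differs from the honest one,
and as long as the two disagree at the challenge `r_k` the consistency test forces them to differ in
the next round; the final test rules out a disagreement in the last round. Hence at some round `k`
the prover's polynomial differs from the honest one but agrees with it at `r_k`, i.e. `r_k` is a
root of a nonzero polynomial of degree at most `d` determined by `r_1, …, r_{k-1}`. Each round
admits at most `d·|F|^{l-1}` such tuples, and a union bound over the `l` rounds concludes.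
-/

section

open Finset Function Polynomial

namespace Fintype

variable {ι : Type*} [DecidableEq ι] [Fintype ι] {α : ι → Type*} {M : Type*} [AddCommMonoid M]

theorem sum_piFinset_eq_sum_sum_piFinset_update [∀ i, DecidableEq (α i)] (s : ∀ i, Finset (α i))
    (k : ι) (f : (∀ i, α i) → M) :
    ∑ x ∈ piFinset s, f x = ∑ a ∈ s k, ∑ x ∈ piFinset (update s k {a}), f x := by
  rw [← sum_fiberwise_of_maps_to (g := fun x => x k) fun x hx => mem_piFinset.1 hx k]
  exact Finset.sum_congr rfl fun a ha => by
    rw [piFinset_update_singleton_eq_filter_piFinset_eq s k ha]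

theorem sum_piFinset_update_singleton_comp_update (s : ∀ i, Finset (α i)) (k : ι) (a b : α k)
    (f : (∀ i, α i) → M) :
    ∑ x ∈ piFinset (update s k {a}), f (update x k b) = ∑ x ∈ piFinset (update s k {b}), f x := by
  refine Finset.sum_nbij' (update · k b) (update · k a) ?_ ?_ ?_ ?_ fun _ _ => rfl <;>
    intro x hx <;> simp only [mem_piFinset] at hx ⊢ <;> grind

theorem sum_piFinset_zero_one {R : Type*} [Semiring R] [Nontrivial R] [DecidableEq R]
    (f : (ι → R) → M) :
    ∑ x ∈ piFinset fun _ => ({0, 1} : Finset R), f x =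
      ∑ w : ι → Bool, f fun i => if w i then 1 else 0 := by
  have hbool : ({0, 1} : Finset R) = univ.image fun b : Bool => if b then 1 else 0 := by
    ext; simp [or_comm]
  have hinj : Injective fun b : Bool => if b then (1 : R) else 0 := by
    intro a b; cases a <;> cases b <;> simp
  rw [hbool, piFinset_image, piFinset_univ, sum_image fun _ _ _ _ h => ?_]
  exact funext fun i => hinj (congrFun h i)

end Fintype

namespace MvPolynomial

variable {σ R : Type*} [CommSemiring R]

theorem eval_aeval (f : σ → R[X]) (y : R) (p : MvPolynomial σ R) :
    (aeval f p).eval y = eval (fun i => (f i).eval y) p := by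
  rw [← coe_aeval_eq_eval, ← Polynomial.coe_aeval_eq_eval, ← AlgHom.comp_apply, comp_aeval]
  rfl

/- Substituting constants for the variables other than `a` is a coefficient map on `p` viewed as
a polynomial in `X a`, whose degree is `degreeOf a p` by `degreeOf_eq_natDegree`. -/
theorem natDegree_aeval_update_X_le [DecidableEq σ] (x : σ → R) (a : σ) (p : MvPolynomial σ R) :
    (aeval (update (fun i => Polynomial.C (x i)) a Polynomial.X) p).natDegree ≤ p.degreeOf a := by
  set e := Equiv.optionSubtypeNe a
  have : aeval (update (fun i => Polynomial.C (x i)) a Polynomial.X) =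
      (Polynomial.mapAlgHom (aeval fun b : {b // b ≠ a} => x b)).comp
        ((optionEquivLeft R {b // b ≠ a}).toAlgHom.comp (rename e.symm)) := by
    refine algHom_ext fun i => ?_
    rcases eq_or_ne i a with rfl | hi
    · simp [e]
    · simp [e, hi]
  rw [this, degreeOf_eq_natDegree]
  exact natDegree_map_le

end MvPolynomial

namespace Polynomial

theorem exists_ne_and_eval_eq_of_sum_ne {R : Type*} [Semiring R] {n : ℕ} (hn : 0 < n)
    (p q : Fin n → R[X]) (x : Fin n → R)
    (hfirst : (p ⟨0, hn⟩).eval 0 + (p ⟨0, hn⟩).eval 1 ≠ (q ⟨0, hn⟩).eval 0 + (q ⟨0, hn⟩).eval 1)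
    (hp : ∀ i (hi : i + 1 < n), (p ⟨i + 1, hi⟩).eval 0 + (p ⟨i + 1, hi⟩).eval 1 =
      (p ⟨i, Nat.lt_of_succ_lt hi⟩).eval (x ⟨i, Nat.lt_of_succ_lt hi⟩))
    (hq : ∀ i (hi : i + 1 < n), (q ⟨i + 1, hi⟩).eval 0 + (q ⟨i + 1, hi⟩).eval 1 =
      (q ⟨i, Nat.lt_of_succ_lt hi⟩).eval (x ⟨i, Nat.lt_of_succ_lt hi⟩))
    (hlast : (p ⟨n - 1, Nat.sub_one_lt_of_lt hn⟩).eval (x ⟨n - 1, Nat.sub_one_lt_of_lt hn⟩) =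
      (q ⟨n - 1, Nat.sub_one_lt_of_lt hn⟩).eval (x ⟨n - 1, Nat.sub_one_lt_of_lt hn⟩)) :
    ∃ k, p k ≠ q k ∧ (p k).eval (x k) = (q k).eval (x k) := by
  by_contra! hsep
  have hne : ∀ i (hi : i < n), (p ⟨i, hi⟩).eval (x ⟨i, hi⟩) ≠ (q ⟨i, hi⟩).eval (x ⟨i, hi⟩) := by
    intro i
    induction i with
    | zero => exact fun hi => hsep _ fun he => hfirst (by rw [he])
    | succ i ih =>
      exact fun hi => hsep _ fun he => ih (by omega) (by rw [← hp i hi, ← hq i hi, he])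
  exact hne (n - 1) (by omega) hlast

theorem card_filter_apply_mem_roots_le {ι F : Type*} [Fintype ι] [DecidableEq ι] [CommRing F]
    [IsDomain F] [Fintype F] [DecidableEq F] (k : ι) (P : (ι → F) → F[X]) {d : ℕ}
    (hP : ∀ r s, (∀ j, j ≠ k → r j = s j) → P r = P s) (hd : ∀ r, (P r).natDegree ≤ d) :
    #{r | r k ∈ (P r).roots} ≤ d * Fintype.card F ^ (Fintype.card ι - 1) := by
  set S : Finset (ι → F) := {r | r k ∈ (P r).roots}
  let restrict : (ι → F) → ({j // j ≠ k} → F) := fun r j => r j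
  calc #S ≤ d * #(S.image restrict) := card_le_mul_card_image _ _ fun z hz => ?_
    _ ≤ d * Fintype.card ({j // j ≠ k} → F) := by gcongr; exact card_le_univ _
    _ = d * Fintype.card F ^ (Fintype.card ι - 1) := by simp
  obtain ⟨r₀, -, rfl⟩ := mem_image.1 hz
  have hfiber : ∀ r, restrict r = restrict r₀ → P r = P r₀ := fun r hr =>
    hP r r₀ fun j hj => congrFun hr ⟨j, hj⟩
  calc #{r ∈ S | restrict r = restrict r₀} ≤ #(P r₀).roots.toFinset := by
        refine card_le_card_of_injOn (· k) (fun r hr => ?_) fun r hr s hs hrs => ?_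
        · simp only [S, coe_filter, mem_filter, mem_univ, true_and] at hr
          simpa [← hfiber r hr.2] using hr.1
        · simp only [S, coe_filter, mem_filter, mem_univ, true_and] at hr hs
          funext j
          rcases eq_or_ne j k with rfl | hj
          · exact hrs
          · exact congrFun (hr.2.trans hs.2.symm) ⟨j, hj⟩
    _ ≤ d := (Multiset.toFinset_card_le _).trans ((card_roots' _).trans (hd r₀))

end Polynomial

namespace SumCheck

variable {R : Type*} [CommRing R] [DecidableEq R] {l : ℕ}

def subcube (i : ℕ) (r : Fin l → R) : Fin l → Finset R :=
  fun j => if (j : ℕ) < i then {r j} else {0, 1}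

/- Coordinate `k` of the summation point is a dummy, fixed to `0` and then replaced by `X`;
this keeps the polynomial independent of `r k`. -/
noncomputable def honestPoly (h : MvPolynomial (Fin l) R) (k : Fin l) (r : Fin l → R) : R[X] :=
  ∑ x ∈ Fintype.piFinset (update (subcube k r) k {0}),
    MvPolynomial.aeval (update (fun j => C (x j)) k X) h

theorem subcube_congr {i : ℕ} {r s : Fin l → R} (hrs : ∀ j : Fin l, (j : ℕ) < i → r j = s j) :
    subcube i r = subcube i s := by
  funext j
  by_cases hj : (j : ℕ) < i <;> simp [subcube, hj, hrs]

theorem update_subcube_self (k : Fin l) (r : Fin l → R) :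
    update (subcube k r) k {r k} = subcube (k + 1) r := by
  funext j
  rcases eq_or_ne j k with rfl | hj
  · simp [subcube]
  · have : (j : ℕ) ≠ k := Fin.val_ne_of_ne hj
    by_cases hjk : (j : ℕ) < k <;> simp [subcube, hj, hjk] <;> omega

variable (h : MvPolynomial (Fin l) R)

theorem eval_honestPoly (k : Fin l) (r : Fin l → R) (y : R) :
    (honestPoly h k r).eval y =
      ∑ x ∈ Fintype.piFinset (update (subcube k r) k {y}), MvPolynomial.eval x h := by
  rw [honestPoly, eval_finsetSum,
    ← Fintype.sum_piFinset_update_singleton_comp_update _ k 0 y (MvPolynomial.eval · h)]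
  refine Finset.sum_congr rfl fun x _ => ?_
  rw [MvPolynomial.eval_aeval]
  congr 2 with j
  rcases eq_or_ne j k with rfl | hj <;> simp [*]

theorem honestPoly_eval_zero_add_eval_one [Nontrivial R] (k : Fin l) (r : Fin l → R) :
    (honestPoly h k r).eval 0 + (honestPoly h k r).eval 1 =
      ∑ x ∈ Fintype.piFinset (subcube k r), MvPolynomial.eval x h := by
  rw [Fintype.sum_piFinset_eq_sum_sum_piFinset_update _ k, eval_honestPoly, eval_honestPoly]
  simp [subcube]

theorem eval_honestPoly_self (k : Fin l) (r : Fin l → R) :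
    (honestPoly h k r).eval (r k) =
      ∑ x ∈ Fintype.piFinset (subcube (k + 1) r), MvPolynomial.eval x h := by
  rw [eval_honestPoly, update_subcube_self]

theorem honestPoly_congr (k : Fin l) {r s : Fin l → R} (hrs : ∀ j < k, r j = s j) :
    honestPoly h k r = honestPoly h k s := by
  rw [honestPoly, honestPoly, subcube_congr fun j hj => hrs j hj]

theorem natDegree_honestPoly_le (k : Fin l) (r : Fin l → R) :
    (honestPoly h k r).natDegree ≤ h.degreeOf k :=
  natDegree_sum_le_of_forall_le _ _ fun x _ => MvPolynomial.natDegree_aeval_update_X_le x k h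

theorem honestPoly_zero_eval_zero_add_eval_one [Nontrivial R] (hl : 0 < l) (r : Fin l → R) :
    (honestPoly h ⟨0, hl⟩ r).eval 0 + (honestPoly h ⟨0, hl⟩ r).eval 1 =
      ∑ w : Fin l → Bool, MvPolynomial.eval (fun i => if w i then 1 else 0) h := by
  rw [honestPoly_eval_zero_add_eval_one, ← Fintype.sum_piFinset_zero_one (MvPolynomial.eval · h)]
  rfl

theorem honestPoly_succ_eval_zero_add_eval_one [Nontrivial R] {i : ℕ} (hi : i + 1 < l)
    (r : Fin l → R) :
    (honestPoly h ⟨i + 1, hi⟩ r).eval 0 + (honestPoly h ⟨i + 1, hi⟩ r).eval 1 =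
      (honestPoly h ⟨i, Nat.lt_of_succ_lt hi⟩ r).eval (r ⟨i, Nat.lt_of_succ_lt hi⟩) := by
  rw [honestPoly_eval_zero_add_eval_one, eval_honestPoly_self]

theorem eval_honestPoly_last (hl : 0 < l) (r : Fin l → R) :
    (honestPoly h ⟨l - 1, Nat.sub_one_lt_of_lt hl⟩ r).eval (r ⟨l - 1, Nat.sub_one_lt_of_lt hl⟩) =
      MvPolynomial.eval r h := by
  have : subcube (l - 1 + 1) r = fun j => {r j} := by
    funext j
    simp [subcube, show (j : ℕ) < l - 1 + 1 by omega]
  rw [eval_honestPoly_self, Fin.val_mk, this, Fintype.piFinset_singleton, sum_singleton]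

end SumCheck

end

/-- **Soundness of the sum-check protocol.**
Let `h` be a polynomial in `l ≥ 1` variables over a finite field `F` of degree at most `d` in
each variable whose sum over the Boolean cube is nonzero. A (possibly dishonest, adaptive)
prover supplies, for each round `i` (here indexed from `0` to `l − 1`, so `g' i` plays the role
of `g'_{i+1}` and depends on the previously chosen elements `r_1,…,r_i`), a univariate
polynomial of degree at most `d`. Then the number of tuples `r ∈ F^l` passing the first
consistency test `g'_1(0) + g'_1(1) = 0`, the remaining consistency tests
`g'_{i+1}(0) + g'_{i+1}(1) = g'_i(r_i)`, and the final test `g'_l(r_l) = h(r)` is at most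
`d·l·|F|^{l−1}`. -/
theorem sumcheck_soundness (F : Type*) [Field F] [Fintype F] (l d : ℕ) (hl : 0 < l)
    (h : MvPolynomial (Fin l) F)
    (hdeg : ∀ i : Fin l, h.degreeOf i ≤ d)
    (hsum : ∑ w : Fin l → Bool,
        MvPolynomial.eval (fun i => if w i then (1 : F) else 0) h ≠ 0)
    (g' : (i : ℕ) → (Fin i → F) → Polynomial F)
    (hg' : ∀ i : ℕ, i < l → ∀ ρ : Fin i → F, (g' i ρ).degree ≤ (d : ℕ)) :
    Nat.card {r : Fin l → F //
      ((g' 0 (fun j => r (Fin.castLE (by omega) j))).eval 0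
        + (g' 0 (fun j => r (Fin.castLE (by omega) j))).eval 1 = 0) ∧
      (∀ i : ℕ, ∀ hi : i + 1 < l,
        (g' (i + 1) (fun j => r (Fin.castLE (by omega) j))).eval 0
          + (g' (i + 1) (fun j => r (Fin.castLE (by omega) j))).eval 1
          = (g' i (fun j => r (Fin.castLE (by omega) j))).eval (r ⟨i, by omega⟩)) ∧
      ((g' (l - 1) (fun j => r (Fin.castLE (by omega) j))).eval (r ⟨l - 1, by omega⟩)
        = MvPolynomial.eval r h)}
      ≤ d * l * Fintype.card F ^ (l - 1) := by
  open Finset Polynomial SumCheck in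
  classical
  let prover (k : Fin l) (r : Fin l → F) : F[X] := g' k fun j => r (Fin.castLE k.is_le' j)
  let bad (k : Fin l) : Finset (Fin l → F) := {r | r k ∈ (prover k r - honestPoly h k r).roots}
  rw [Nat.card_eq_fintype_card, Fintype.card_subtype]
  calc _ ≤ #(univ.biUnion bad) := card_le_card fun r hr => ?_
    _ ≤ ∑ k, #(bad k) := card_biUnion_le
    _ ≤ ∑ _k : Fin l, d * Fintype.card F ^ (l - 1) := sum_le_sum fun k _ => ?_
    _ = d * l * Fintype.card F ^ (l - 1) := by simp; ring
  · obtain ⟨h0, hstep, hlast⟩ := (mem_filter.1 hr).2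
    obtain ⟨k, hne, heq⟩ := exists_ne_and_eval_eq_of_sum_ne hl (prover · r) (honestPoly h · r) r
      (by rw [h0, honestPoly_zero_eval_zero_add_eval_one]; exact hsum.symm) hstep
      (fun i hi => honestPoly_succ_eval_zero_add_eval_one h hi r)
      (hlast.trans (eval_honestPoly_last h hl r).symm)
    exact mem_biUnion.2 ⟨k, mem_univ _,
      mem_filter.2 ⟨mem_univ _, mem_roots'.2 ⟨sub_ne_zero.2 hne, by simp [heq]⟩⟩⟩
  · refine (card_filter_apply_mem_roots_le k (fun r => prover k r - honestPoly h k r) (d := d)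
      (fun r s hrs => ?_) fun r => ?_).trans_eq (by rw [Fintype.card_fin])
    · have hlt : ∀ j < k, r j = s j := fun j hj => hrs j hj.ne
      rw [honestPoly_congr h k hlt, show prover k r = prover k s from
        congrArg (g' k) (funext fun j => hlt _ j.isLt)]
    · exact (natDegree_sub_le _ _).trans (max_le (natDegree_le_of_degree_le (hg' k k.isLt _))
        ((natDegree_honestPoly_le h k r).trans (hdeg k)))
end
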